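/- For any two sequences σ1 (with last visit u) and σ2 (with first visit v), the latest optimal start time of the concatenation satisfies L(σ1 ⊕ σ2) = min(L(σ2) − δ, L(σ1)) + Δ_TW, where δ = D(σ1) − TW(σ1) + d_{u v} and Δ_TW = max(E(σ1) + δ − L(σ2), 0). -/

import Mathlib

variable {V : Type*}

/-- Service start time at a visit: `h = max(a v, min(τ, b v))`. -/
noncomputable def svcStart (a b : V → ℝ) (v : V) (t : ℝ) : ℝ :=
  max (a v) (min t (b v))

/-- Completion time `C(σ, t)` of the forward schedule of `σ` started at `t`. -/
noncomputable def comp (a b s : V → ℝ) (d : V → V → ℝ) : List V → ℝ → ℝ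
  | [], t => t
  | [v], t => svcStart a b v t + s v
  | v :: w :: rest, t => comp a b s d (w :: rest) (svcStart a b v t + s v + d v w)

/-- Total time warp `W(σ, t)` of the forward schedule of `σ` started at `t`. -/
noncomputable def warp (a b s : V → ℝ) (d : V → V → ℝ) : List V → ℝ → ℝ
  | [], _ => 0
  | [v], t => max (t - b v) 0
  | v :: w :: rest, t =>
      max (t - b v) 0 + warp a b s d (w :: rest) (svcStart a b v t + s v + d v w)

/-- Active duration `A(σ, t) = C(σ, t) − t + W(σ, t)`. -/
noncomputable def activeDur (a b s : V → ℝ) (d : V → V → ℝ) (σ : List V) (t : ℝ) : ℝ :=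
  comp a b s d σ t - t + warp a b s d σ t

/-- Minimum time warp `TW(σ) = min_t W(σ, t)`. -/
noncomputable def TWv (a b s : V → ℝ) (d : V → V → ℝ) (σ : List V) : ℝ :=
  sInf (Set.range fun t => warp a b s d σ t)

/-- Latest start time achieving the minimum time warp: `L(σ) = max {t : W(σ,t) = TW(σ)}`. -/
noncomputable def Lv (a b s : V → ℝ) (d : V → V → ℝ) (σ : List V) : ℝ :=
  sSup {t | warp a b s d σ t = TWv a b s d σ}

/-- Minimum active duration `D(σ) = min_t A(σ, t)`. -/
noncomputable def Dv (a b s : V → ℝ) (d : V → V → ℝ) (σ : List V) : ℝ :=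
  sInf (Set.range fun t => activeDur a b s d σ t)

/-- Earliest start time achieving the minimum duration: `E(σ) = min {t : A(σ,t) = D(σ)}`. -/
noncomputable def Ev (a b s : V → ℝ) (d : V → V → ℝ) (σ : List V) : ℝ :=
  sInf {t | activeDur a b s d σ t = Dv a b s d σ}

/-!
For a nonempty sequence `σ` the time warp is a hinge, `W(σ, t) = max(t - L, 0) + K`, and
`C(σ, t) + W(σ, t) = max(t, E) + D` with `E ≤ L`: prepending a visit, whose service start clamps
the arrival time into its window, preserves both shapes by a single clamping identity
(`max_sub_add_max_clamp`). Reading off the extrema gives `K = TW`, `L = L(σ)`, `D = D(σ)`,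
`E = E(σ)`, and the completion time is `C(σ, t) = clamp_[E, L](t) + D - TW`.

Since `W(σ₁ ⊕ σ₂, t) = W(σ₁, t) + W(σ₂, C(σ₁, t) + d u v)`, the same clamping identity shows that
the time warp of the concatenation is again a hinge, with kink at
`clamp_[E₁, L₁](L₂ - δ) = min(L₂ - δ, L₁) + max(E₁ + δ - L₂, 0)`.
-/

theorem max_sub_add_max_clamp {a b : ℝ} (hab : a ≤ b) (c X t : ℝ) :
    max (t - b) 0 + max (max a (min t b) + c - X) 0
      = max (t - max a (min (X - c) b)) 0 + max (a + c - X) 0 := by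
  simp only [max_def, min_def]
  split_ifs <;> linarith

theorem max_eq_max_sub_add (p q : ℝ) : max p q = max (p - q) 0 + q := by
  rw [← sub_self q, max_sub_sub_right, sub_add_cancel]

theorem max_min_eq_min_add_max {E L₁ L₂ δ : ℝ} (h : E ≤ L₁) :
    max E (min (L₂ - δ) L₁) = min (L₂ - δ) L₁ + max (E + δ - L₂) 0 := by
  simp only [max_def, min_def]
  split_ifs <;> linarith

section Schedule

variable {a b s : V → ℝ} {d : V → V → ℝ}

theorem warp_cons_cons (x y : V) (rest : List V) (t : ℝ) :
    warp a b s d (x :: y :: rest) t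
      = max (t - b x) 0 + warp a b s d (y :: rest) (max (a x) (min t (b x)) + (s x + d x y)) := by
  rw [warp, svcStart, add_assoc]

theorem comp_cons_cons (x y : V) (rest : List V) (t : ℝ) :
    comp a b s d (x :: y :: rest) t
      = comp a b s d (y :: rest) (max (a x) (min t (b x)) + (s x + d x y)) := by
  rw [comp, svcStart, add_assoc]

structure HasProfile (a b s : V → ℝ) (d : V → V → ℝ) (σ : List V) (E L K D : ℝ) : Prop where
  le : E ≤ L
  warp_eq : ∀ t, warp a b s d σ t = max (t - L) 0 + K
  comp_add_warp_eq : ∀ t, comp a b s d σ t + warp a b s d σ t = max t E + D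

theorem hasProfile_singleton (hab : ∀ v, a v ≤ b v) (x : V) :
    HasProfile a b s d [x] (a x) (b x) 0 (s x) where
  le := hab x
  warp_eq t := by simp [warp]
  comp_add_warp_eq t := by
    simp only [comp, warp, svcStart, max_def, min_def]
    split_ifs <;> linarith [hab x]

theorem HasProfile.cons_cons (hab : ∀ v, a v ≤ b v) {x y : V} {rest : List V} {E L K D : ℝ}
    (h : HasProfile a b s d (y :: rest) E L K D) :
    let c := s x + d x y
    let E' := max (a x) (min (E - c) (b x))
    HasProfile a b s d (x :: y :: rest) E' (max (a x) (min (L - c) (b x)))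
      (max (a x + c - L) 0 + K) (max (a x + c - E) 0 + E + D - E') := by
  intro c E'
  refine ⟨max_le_max le_rfl (min_le_min (by linarith [h.le]) le_rfl), fun t => ?_, fun t => ?_⟩
  · rw [warp_cons_cons, h.warp_eq]
    linarith [max_sub_add_max_clamp (hab x) c L t]
  · have hE := h.comp_add_warp_eq (max (a x) (min t (b x)) + c)
    rw [comp_cons_cons, warp_cons_cons]
    linarith [max_sub_add_max_clamp (hab x) c E t,
      max_eq_max_sub_add (max (a x) (min t (b x)) + c) E, max_eq_max_sub_add t E']

theorem exists_hasProfile (hab : ∀ v, a v ≤ b v) :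
    ∀ σ : List V, σ ≠ [] → ∃ E L K D, HasProfile a b s d σ E L K D
  | [], h => absurd rfl h
  | [x], _ => ⟨_, _, _, _, hasProfile_singleton hab x⟩
  | _ :: y :: rest, _ =>
    have ⟨_, _, _, _, h⟩ := exists_hasProfile hab (y :: rest) (List.cons_ne_nil _ _)
    ⟨_, _, _, _, h.cons_cons hab⟩

theorem TWv_eq_of_warp_eq {σ : List V} {L K : ℝ}
    (h : ∀ t, warp a b s d σ t = max (t - L) 0 + K) : TWv a b s d σ = K :=
  IsLeast.csInf_eq ⟨⟨L, by simp [h]⟩, by rintro _ ⟨t, rfl⟩; simp [h]⟩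

theorem Lv_eq_of_warp_eq {σ : List V} {L K : ℝ}
    (h : ∀ t, warp a b s d σ t = max (t - L) 0 + K) : Lv a b s d σ = L := by
  have hset : {t | warp a b s d σ t = TWv a b s d σ} = Set.Iic L := by
    ext t
    simp [TWv_eq_of_warp_eq h, h]
  rw [Lv, hset, csSup_Iic]

namespace HasProfile

variable {σ : List V} {E L K D : ℝ}

theorem activeDur_eq (h : HasProfile a b s d σ E L K D) (t : ℝ) :
    activeDur a b s d σ t = max (E - t) 0 + D := by
  rw [activeDur]
  linarith [h.comp_add_warp_eq t, max_comm t E, max_eq_max_sub_add E t]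

theorem Dv_eq (h : HasProfile a b s d σ E L K D) : Dv a b s d σ = D :=
  IsLeast.csInf_eq ⟨⟨E, by simp [h.activeDur_eq]⟩, by rintro _ ⟨t, rfl⟩; simp [h.activeDur_eq]⟩

theorem Ev_eq (h : HasProfile a b s d σ E L K D) : Ev a b s d σ = E := by
  have hset : {t | activeDur a b s d σ t = Dv a b s d σ} = Set.Ici E := by
    ext t
    simp [h.Dv_eq, h.activeDur_eq]
  rw [Ev, hset, csInf_Ici]

theorem comp_eq (h : HasProfile a b s d σ E L K D) (t : ℝ) :
    comp a b s d σ t = max E (min t L) + (D - K) := by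
  have h₁ := h.comp_add_warp_eq t
  rw [h.warp_eq] at h₁
  have h₂ : max t E - max (t - L) 0 = max E (min t L) := by
    simp only [max_def, min_def]
    split_ifs <;> linarith [h.le]
  linarith

end HasProfile

theorem warp_append_cons {σ₁ : List V} {u : V} (hu : σ₁.getLast? = some u) (v : V) (σ₂ : List V)
    (t : ℝ) :
    warp a b s d (σ₁ ++ v :: σ₂) t
      = warp a b s d σ₁ t + warp a b s d (v :: σ₂) (comp a b s d σ₁ t + d u v) := by
  induction σ₁ generalizing t with
  | nil => simp at hu
  | cons x tail ih =>
    cases tail with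
    | nil =>
      obtain rfl : x = u := by simpa using hu
      simp [warp, comp, add_assoc]
    | cons y rest =>
      rw [List.getLast?_cons_cons] at hu
      rw [List.cons_append, List.cons_append, warp_cons_cons, ← List.cons_append, ih hu,
        warp_cons_cons, comp_cons_cons, add_assoc]

theorem Lv_append_cons {σ₁ σ₂ : List V} {u v : V}
    (hu : σ₁.getLast? = some u) {E₁ L₁ K₁ D₁ L₂ K₂ : ℝ} (h₁ : HasProfile a b s d σ₁ E₁ L₁ K₁ D₁)
    (h₂ : ∀ t, warp a b s d (v :: σ₂) t = max (t - L₂) 0 + K₂) :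
    Lv a b s d (σ₁ ++ v :: σ₂) = max E₁ (min (L₂ - (D₁ - K₁ + d u v)) L₁) := by
  apply Lv_eq_of_warp_eq (K := K₁ + max (E₁ + (D₁ - K₁ + d u v) - L₂) 0 + K₂)
  intro t
  rw [warp_append_cons hu, h₁.warp_eq, h₂, h₁.comp_eq, add_assoc (max E₁ (min t L₁))]
  linarith [max_sub_add_max_clamp h₁.le (D₁ - K₁ + d u v) L₂ t]

end Schedule

theorem concat_L_general
    (a b s : V → ℝ) (d : V → V → ℝ)
    (hab : ∀ v, a v ≤ b v)
    (σ₁ σ₂ : List V) (u v : V)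
    (hu : σ₁.getLast? = some u) (hv : σ₂.head? = some v) :
    Lv a b s d (σ₁ ++ σ₂) =
      min (Lv a b s d σ₂ - (Dv a b s d σ₁ - TWv a b s d σ₁ + d u v)) (Lv a b s d σ₁) +
        max (Ev a b s d σ₁ + (Dv a b s d σ₁ - TWv a b s d σ₁ + d u v) - Lv a b s d σ₂) 0 := by
  obtain ⟨σ₂, rfl⟩ := List.head?_eq_some_iff.mp hv
  obtain ⟨E₁, L₁, K₁, D₁, h₁⟩ :=
    exists_hasProfile (s := s) (d := d) hab σ₁ (by rintro rfl; simp at hu)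
  obtain ⟨_, L₂, K₂, _, h₂⟩ := exists_hasProfile (s := s) (d := d) hab (v :: σ₂) (by simp)
  rw [Lv_append_cons hu h₁ h₂.warp_eq, TWv_eq_of_warp_eq h₁.warp_eq, Lv_eq_of_warp_eq h₁.warp_eq,
    Lv_eq_of_warp_eq h₂.warp_eq, h₁.Dv_eq, h₁.Ev_eq, max_min_eq_min_add_max h₁.le]

/-- For sequences `σ₁` (with last visit `u`) and `σ₂` (with first visit `v`),
`L(σ₁ ⊕ σ₂) = min(L(σ₂) − δ, L(σ₁)) + Δ_TW` where `δ = D(σ₁) − TW(σ₁) + d u v` and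
`Δ_TW = max(E(σ₁) + δ − L(σ₂), 0)`. -/
theorem concat_L [Fintype V]
    (a b s : V → ℝ) (d : V → V → ℝ)
    (hs : ∀ v, 0 ≤ s v) (hab : ∀ v, a v ≤ b v) (hd : ∀ u v, 0 ≤ d u v)
    (σ₁ σ₂ : List V) (u v : V)
    (hu : σ₁.getLast? = some u) (hv : σ₂.head? = some v) :
    Lv a b s d (σ₁ ++ σ₂) =
      min (Lv a b s d σ₂ - (Dv a b s d σ₁ - TWv a b s d σ₁ + d u v)) (Lv a b s d σ₁) +
        max (Ev a b s d σ₁ + (Dv a b s d σ₁ - TWv a b s d σ₁ + d u v) - Lv a b s d σ₂) 0 :=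
  concat_L_general a b s d hab σ₁ σ₂ u v hu hv
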